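/- arXiv:1303.0083 — 2 statements merged into one kernel-verified Lean document; each statement's English description precedes it below -/
import Mathlib

section
/- Let k be a field, S = k[x,y,z], I = (x³, x²y, y³, z³, x²z²), and R = S/I. In the Koszul homology H₁ of the Koszul complex on x,y,z over R, the classes of the cycles x²e₁, xy e₁, xz e₁, y² e₂, z² e₃ are k-linearly independent modulo the image of φ₂ : R³ → R³ (the Koszul differential in degree 2); that is, no nontrivial k-linear combination of these five elements of R³ lies in im(φ₂). -/
open MvPolynomial

/-- The ideal `I = (x³, x²y, y³, z³, x²z²)` of Example 3.1. -/
noncomputable def exIdeal14 (k : Type*) [Field k] : Ideal (MvPolynomial (Fin 3) k) :=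
  Ideal.span {X 0 ^ 3, X 0 ^ 2 * X 1, X 1 ^ 3, X 2 ^ 3, X 0 ^ 2 * X 2 ^ 2}

/-- The quotient ring `R = k[x,y,z]/I` of Example 3.1. -/
noncomputable abbrev ExRing14 (k : Type*) [Field k] :=
  MvPolynomial (Fin 3) k ⧸ exIdeal14 k

/-- The class in `R` of a polynomial. -/
noncomputable def exMk14 (k : Type*) [Field k] (p : MvPolynomial (Fin 3) k) : ExRing14 k :=
  Ideal.Quotient.mk (exIdeal14 k) p

/-- The Koszul differential `φ₂ : R³ → R³` on `x,y,z` over `R`, given by the matrix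
`[[−y,−z,0],[x,0,−z],[0,x,y]]`. -/
noncomputable def exPhi2 (k : Type*) [Field k] (u : Fin 3 → ExRing14 k) :
    Fin 3 → ExRing14 k :=
  ![-(exMk14 k (X 1)) * u 0 - exMk14 k (X 2) * u 1,
    exMk14 k (X 0) * u 0 - exMk14 k (X 2) * u 2,
    exMk14 k (X 0) * u 1 + exMk14 k (X 1) * u 2]

/-- The five Koszul 1-cycles `x²e₁, xy e₁, xz e₁, y² e₂, z² e₃` of Example 3.1. -/
noncomputable def exCycles (k : Type*) [Field k] : Fin 5 → (Fin 3 → ExRing14 k) :=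
  ![Pi.single 0 (exMk14 k (X 0 ^ 2)),
    Pi.single 0 (exMk14 k (X 0 * X 1)),
    Pi.single 0 (exMk14 k (X 0 * X 2)),
    Pi.single 1 (exMk14 k (X 1 ^ 2)),
    Pi.single 2 (exMk14 k (X 2 ^ 2))]

/-! Every generator of `I` is a monomial of degree at least three, so the coefficients of degree
at most two are well defined on `R`. Compare them in `φ₂(u) = ∑ cᵢ zᵢ`, `zᵢ` the five cycles: those at `x²`, `y²`, `z²`
give `c₀ = c₃ = c₄ = 0`; the `x²`-coefficients of the last two components kill the
`x`-coefficients of `u₀` and `u₁`, and then those at `xy` and `xz` give `c₁ = c₂ = 0`. -/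

namespace MvPolynomial

theorem coeff_eq_zero_of_mem_span_monomial_of_degree_lt {σ R : Type*} [CommSemiring R]
    {s : Set (σ →₀ ℕ)} {n : ℕ} (hs : ∀ d ∈ s, n ≤ d.degree) {p : MvPolynomial σ R}
    (hp : p ∈ Ideal.span ((fun d => monomial d (1 : R)) '' s)) {m : σ →₀ ℕ}
    (hm : m.degree < n) : coeff m p = 0 := by
  by_contra hne
  obtain ⟨d, hd, hdm⟩ := mem_ideal_span_monomial_image.mp hp m (mem_support_iff.mpr hne)
  exact (hm.trans_le ((hs d hd).trans (Finsupp.degree_mono hdm))).false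

end MvPolynomial

section

variable {k : Type*} [Field k]

theorem exIdeal14_le_span_monomial_three_le_degree :
    exIdeal14 k ≤ Ideal.span ((fun d => monomial d (1 : k)) '' {d | 3 ≤ d.degree}) := by
  refine Ideal.span_le.mpr ?_
  simp only [Set.insert_subset_iff, Set.singleton_subset_iff, SetLike.mem_coe, X,
    monomial_pow, monomial_mul, one_pow, mul_one]
  refine ⟨?_, ?_, ?_, ?_, ?_⟩ <;> refine Ideal.subset_span ⟨_, ?_, rfl⟩ <;> simp

theorem coeff_eq_of_exMk14_eq {p q : MvPolynomial (Fin 3) k} (h : exMk14 k p = exMk14 k q)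
    {m : Fin 3 →₀ ℕ} (hm : m.degree ≤ 2) : coeff m p = coeff m q := by
  rw [← sub_eq_zero, ← coeff_sub]
  exact coeff_eq_zero_of_mem_span_monomial_of_degree_lt (fun _ hd => hd)
    (exIdeal14_le_span_monomial_three_le_degree (Ideal.Quotient.eq.mp h)) (by omega)

theorem exPhi2_exMk14_comp (v : Fin 3 → MvPolynomial (Fin 3) k) :
    exPhi2 k (exMk14 k ∘ v) = exMk14 k ∘
      ![-(X 1 * v 0) - X 2 * v 1, X 0 * v 0 - X 2 * v 2, X 0 * v 1 + X 1 * v 2] := by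
  ext j
  fin_cases j <;> simp [exPhi2, exMk14]; ring

theorem sum_smul_exCycles (c : Fin 5 → k) :
    ∑ i, c i • exCycles k i = exMk14 k ∘
      ![c 0 • X 0 ^ 2 + c 1 • (X 0 * X 1) + c 2 • (X 0 * X 2), c 3 • X 1 ^ 2, c 4 • X 2 ^ 2] := by
  have mk_smul (r : k) (p : MvPolynomial (Fin 3) k) :
      Ideal.Quotient.mk (exIdeal14 k) (r • p) = r • Ideal.Quotient.mk (exIdeal14 k) p :=
    map_smul (Ideal.Quotient.mkₐ k (exIdeal14 k)) r p
  ext j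
  fin_cases j <;> simp [exCycles, exMk14, Fin.sum_univ_five, mk_smul]

open Finsupp in
theorem eq_zero_of_exMk14_comp_eq (c : Fin 5 → k) (v : Fin 3 → MvPolynomial (Fin 3) k)
    (h : exMk14 k ∘ ![-(X 1 * v 0) - X 2 * v 1, X 0 * v 0 - X 2 * v 2, X 0 * v 1 + X 1 * v 2] =
      exMk14 k ∘
        ![c 0 • X 0 ^ 2 + c 1 • (X 0 * X 1) + c 2 • (X 0 * X 2), c 3 • X 1 ^ 2, c 4 • X 2 ^ 2]) :
    c = 0 := by
  have hcoeff (j : Fin 3) (m : Fin 3 →₀ ℕ) (hm : m.degree ≤ 2) :=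
    coeff_eq_of_exMk14_eq (congrFun h j) hm
  have e0_xx : 0 = c 0 := by
    simpa [coeff_X_mul', coeff_X_pow, coeff_X, single_apply, Finsupp.ext_iff, Fin.forall_fin_succ,
      ← single_tsub]
      using (hcoeff 0 (single 0 2) (by simp) :)
  have e0_xy : -coeff (single 0 1) (v 0) = c 1 := by
    simpa [coeff_X_mul', coeff_X_pow, coeff_X, single_apply, Finsupp.ext_iff, Fin.forall_fin_succ,
      ← single_tsub]
      using (hcoeff 0 (single 0 1 + single 1 1) (by simp) :)
  have e0_xz : -coeff (single 0 1) (v 1) = c 2 := by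
    simpa [coeff_X_mul', coeff_X_pow, coeff_X, single_apply, Finsupp.ext_iff, Fin.forall_fin_succ,
      ← single_tsub]
      using (hcoeff 0 (single 0 1 + single 2 1) (by simp) :)
  have e1_xx : coeff (single 0 1) (v 0) = 0 := by
    simpa [coeff_X_mul', coeff_X_pow, coeff_X, single_apply, Finsupp.ext_iff, Fin.forall_fin_succ,
      ← single_tsub]
      using (hcoeff 1 (single 0 2) (by simp) :)
  have e1_yy : 0 = c 3 := by
    simpa [coeff_X_mul', coeff_X_pow, coeff_X, single_apply, Finsupp.ext_iff, Fin.forall_fin_succ,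
      ← single_tsub]
      using (hcoeff 1 (single 1 2) (by simp) :)
  have e2_xx : coeff (single 0 1) (v 1) = 0 := by
    simpa [coeff_X_mul', coeff_X_pow, coeff_X, single_apply, Finsupp.ext_iff, Fin.forall_fin_succ,
      ← single_tsub]
      using (hcoeff 2 (single 0 2) (by simp) :)
  have e2_zz : 0 = c 4 := by
    simpa [coeff_X_mul', coeff_X_pow, coeff_X, single_apply, Finsupp.ext_iff, Fin.forall_fin_succ,
      ← single_tsub]
      using (hcoeff 2 (single 2 2) (by simp) :)
  ext i
  fin_cases i
  · exact e0_xx.symm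
  · simpa [e1_xx] using e0_xy.symm
  · simpa [e2_xx] using e0_xz.symm
  · exact e1_yy.symm
  · exact e2_zz.symm

end

/-- In Example 3.1, the classes of the cycles `x²e₁, xy e₁, xz e₁, y² e₂, z² e₃` are
`k`-linearly independent modulo `im(φ₂)`: no nontrivial `k`-linear combination of them
lies in the image of the Koszul differential `φ₂`. -/
theorem stmt14 (k : Type*) [Field k] (c : Fin 5 → k)
    (h : (∑ i, c i • exCycles k i) ∈ Set.range (exPhi2 k)) : c = 0 := by
  obtain ⟨u, hu⟩ := h
  obtain ⟨v, rfl⟩ : ∃ v, exMk14 k ∘ v = u := Ideal.Quotient.mk_surjective.comp_left u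
  rw [exPhi2_exMk14_comp, sum_smul_exCycles] at hu
  exact eq_zero_of_exMk14_comp_eq c v hu
end

section
/- Let k be a field and R = k[x,y,z]/I with I a monomial ideal, and suppose no generator of I divides x^{a−1} y^{β} z^{γ−1} for given a ≥ 1, β ≥ 0, γ ≥ 1. Then the vector (x^{a−1} y^{β} z^{γ}, 0, 0) ∈ R³ is not in the R-span of the single vector (z, −y, x), provided additionally x^{a−1} y^{β} z^{γ} ∉ I; more precisely, if r·(z,−y,x) = (x^{a−1}y^{β}z^{γ}, 0, 0) for some r ∈ R, with r represented by a polynomial, then x^{a−1} y^{β+1} z^{γ−1} ∈ I. -/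
/-!
A polynomial lies in a monomial ideal `I` iff every monomial of its support does. Lift `r` to
a polynomial `p` and put `m = x^{a-1} y^β z^{γ-1}`: the three coordinates give
`(p - m) z ∈ I` and `p y ∈ I`. If the coefficient of `m` in `p` is `1`, then `m y` lies in the
support of `p y`; otherwise `m` lies in the support of `p - m`, so `m z` lies in that of
`(p - m) z`.
-/

open MvPolynomial

/-- The monomial ideal generated by the monomials with exponent vectors in `V`. -/
noncomputable def monIdeal (k : Type*) [Field k] (V : Set (Fin 3 → ℕ)) :
    Ideal (MvPolynomial (Fin 3) k) :=
  Ideal.span ((fun v => ∏ t, X t ^ v t) '' V)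

namespace MvPolynomial

variable {σ R : Type*} {S : Set (σ →₀ ℕ)}

theorem monomial_mul_X_mem_of_mul_X_mem [CommSemiring R] {p : MvPolynomial σ R} {i : σ}
    (hp : p * X i ∈ Ideal.span ((fun s => monomial s (1 : R)) '' S)) {d : σ →₀ ℕ}
    (hd : coeff d p ≠ 0) :
    monomial d 1 * X i ∈ Ideal.span ((fun s => monomial s (1 : R)) '' S) := by
  rw [← coeff_mul_X d i] at hd
  obtain ⟨s, hs, hle⟩ := mem_ideal_span_monomial_image.mp hp _ (mem_support_iff.mpr hd)
  rw [X, monomial_mul, one_mul]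
  refine mem_ideal_span_monomial_image.mpr fun e he => ⟨s, hs, ?_⟩
  rwa [Finset.mem_singleton.mp (support_monomial_subset he)]

theorem monomial_mul_X_mem_or_mem [CommRing R] [Nontrivial R] {p : MvPolynomial σ R}
    {d : σ →₀ ℕ} {i j : σ}
    (hi : (p - monomial d 1) * X i ∈ Ideal.span ((fun s => monomial s (1 : R)) '' S))
    (hj : p * X j ∈ Ideal.span ((fun s => monomial s (1 : R)) '' S)) :
    monomial d 1 * X j ∈ Ideal.span ((fun s => monomial s (1 : R)) '' S) ∨
      monomial d 1 * X i ∈ Ideal.span ((fun s => monomial s (1 : R)) '' S) := by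
  by_cases hd : coeff d p = 1
  · exact Or.inl (monomial_mul_X_mem_of_mul_X_mem hj (hd ▸ one_ne_zero))
  · refine Or.inr (monomial_mul_X_mem_of_mul_X_mem hi ?_)
    classical
    rwa [coeff_sub, coeff_monomial, if_pos rfl, sub_ne_zero]

end MvPolynomial

theorem monIdeal_eq_span_monomial (k : Type*) [Field k] (V : Set (Fin 3 → ℕ)) :
    monIdeal k V = Ideal.span ((fun s => monomial s (1 : k)) ''
      (Finsupp.equivFunOnFinite.symm '' V)) := by
  simp [monIdeal, Set.image_image, monic_monomial_eq, Finsupp.prod_fintype]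

theorem stmt18_general (k : Type*) [Field k] (V : Set (Fin 3 → ℕ)) (a β γ : ℕ)
    (hγ : 1 ≤ γ)
    (h : ∃ r : MvPolynomial (Fin 3) k ⧸ monIdeal k V,
      r • (![Ideal.Quotient.mk (monIdeal k V) (X 2),
             -(Ideal.Quotient.mk (monIdeal k V) (X 1)),
             Ideal.Quotient.mk (monIdeal k V) (X 0)] :
          Fin 3 → MvPolynomial (Fin 3) k ⧸ monIdeal k V) =
        ![Ideal.Quotient.mk (monIdeal k V) (X 0 ^ (a - 1) * X 1 ^ β * X 2 ^ γ), 0, 0]) :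
    (X 0 ^ (a - 1) * X 1 ^ (β + 1) * X 2 ^ (γ - 1) : MvPolynomial (Fin 3) k) ∈ monIdeal k V ∨
      (X 0 ^ (a - 1) * X 1 ^ β * X 2 ^ γ : MvPolynomial (Fin 3) k) ∈ monIdeal k V := by
  obtain ⟨r, hr⟩ := h
  obtain ⟨p, rfl⟩ := Ideal.Quotient.mk_surjective r
  obtain ⟨c, rfl⟩ : ∃ c, γ = c + 1 := ⟨γ - 1, by omega⟩
  obtain ⟨d, hd⟩ : ∃ d : Fin 3 →₀ ℕ,
      monomial d (1 : k) = X 0 ^ (a - 1) * X 1 ^ β * X 2 ^ c :=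
    ⟨_, by simp only [X_pow_eq_monomial, monomial_mul, mul_one]; rfl⟩
  have h0 := congr_fun hr 0
  have h1 := congr_fun hr 1
  simp only [Pi.smul_apply, Matrix.cons_val_zero, Matrix.cons_val_one, smul_eq_mul,
    map_mul, map_pow] at h0 h1
  have hz : (p - monomial d 1) * X 2 ∈ monIdeal k V := by
    rw [← Ideal.Quotient.eq_zero_iff_mem, hd]
    simp only [map_mul, map_sub, map_pow]
    linear_combination h0
  have hy : p * X 1 ∈ monIdeal k V := by
    rw [← Ideal.Quotient.eq_zero_iff_mem, map_mul]
    linear_combination -h1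
  have hmy : X 0 ^ (a - 1) * X 1 ^ (β + 1) * X 2 ^ c = monomial d (1 : k) * X 1 := by
    rw [hd]; ring
  have hmz : X 0 ^ (a - 1) * X 1 ^ β * X 2 ^ (c + 1) = monomial d (1 : k) * X 2 := by
    rw [hd]; ring
  rw [Nat.add_sub_cancel, hmy, hmz, monIdeal_eq_span_monomial]
  rw [monIdeal_eq_span_monomial] at hz hy
  exact monomial_mul_X_mem_or_mem hz hy

set_option synthInstance.maxHeartbeats 800000 in
/-- Boundary obstruction from Theorem 3.3: in `R = k[x,y,z]/I` for a monomial ideal `I`,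
if `(x^{a−1} y^β z^γ, 0, 0) = r·(z, −y, x)` in `R³` for some `r ∈ R` (with `a, γ ≥ 1`),
then `x^{a−1} y^{β+1} z^{γ−1} ∈ I` or `x^{a−1} y^β z^γ ∈ I`. -/
theorem stmt18 (k : Type*) [Field k] (V : Set (Fin 3 → ℕ)) (a β γ : ℕ)
    (ha : 1 ≤ a) (hγ : 1 ≤ γ)
    (h : ∃ r : MvPolynomial (Fin 3) k ⧸ monIdeal k V,
      r • (![Ideal.Quotient.mk (monIdeal k V) (X 2),
             -(Ideal.Quotient.mk (monIdeal k V) (X 1)),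
             Ideal.Quotient.mk (monIdeal k V) (X 0)] :
          Fin 3 → MvPolynomial (Fin 3) k ⧸ monIdeal k V) =
        ![Ideal.Quotient.mk (monIdeal k V) (X 0 ^ (a - 1) * X 1 ^ β * X 2 ^ γ), 0, 0]) :
    (X 0 ^ (a - 1) * X 1 ^ (β + 1) * X 2 ^ (γ - 1) : MvPolynomial (Fin 3) k) ∈ monIdeal k V ∨
      (X 0 ^ (a - 1) * X 1 ^ β * X 2 ^ γ : MvPolynomial (Fin 3) k) ∈ monIdeal k V :=
  stmt18_general k V a β γ hγ h
end
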